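/- arXiv:2105.02325 — 2 statements merged into one kernel-verified Lean document; each statement's English description precedes it below -/
import Mathlib

section
/- For 0 < H ≤ 1, the function ρ^H(s,t) = (1/2)(|t|^{2H} + |s|^{2H} - |t-s|^{2H}) is positive semidefinite on ℝ × ℝ, i.e., for any finite collection of points t_1,…,t_n ∈ ℝ and real coefficients c_1,…,c_n, the sum Σ_{i,j} c_i c_j ρ^H(t_i, t_j) ≥ 0. -/
open Real Set MeasureTheory

noncomputable def fbmI (α : ℝ) : ℝ := ∫ x in Ioi (0:ℝ), (1 - Real.cos x) * x ^ (-(1 + α))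

lemma fbm_aux_integrable {α : ℝ} (hα : 0 < α) (hα2 : α < 2) (s : ℝ) :
    IntegrableOn (fun x : ℝ => (1 - Real.cos (s * x)) * x ^ (-(1 + α))) (Ioi 0) := by
  have hm : Measurable fun x : ℝ => (1 - Real.cos (s * x)) * x ^ (-(1 + α)) := by
    fun_prop
  have h01 : IntegrableOn (fun x : ℝ => (1 - Real.cos (s * x)) * x ^ (-(1 + α))) (Ioc 0 1) := by
    have hg : IntegrableOn (fun x : ℝ => s ^ 2 / 2 * x ^ (1 - α)) (Ioc 0 1) := by
      have := (intervalIntegral.intervalIntegrable_rpow' (a := 0) (b := 1)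
        (show (-1 : ℝ) < 1 - α by linarith))
      rw [intervalIntegrable_iff_integrableOn_Ioc_of_le zero_le_one] at this
      exact this.const_mul _
    refine hg.mono' (hm.aestronglyMeasurable.restrict) ?_
    refine (ae_restrict_iff' measurableSet_Ioc).2 (Filter.Eventually.of_forall fun x hx => ?_)
    obtain ⟨hx0, hx1⟩ := hx
    have hc : 1 - Real.cos (s * x) ≤ (s * x) ^ 2 / 2 := by
      have := Real.one_sub_sq_div_two_le_cos (x := s * x)
      linarith
    have hc0 : 0 ≤ 1 - Real.cos (s * x) := by
      have := Real.cos_le_one (s * x); linarith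
    have hrp : (0 : ℝ) ≤ x ^ (-(1 + α)) := rpow_nonneg hx0.le _
    rw [Real.norm_eq_abs, abs_of_nonneg (mul_nonneg hc0 hrp)]
    calc (1 - Real.cos (s * x)) * x ^ (-(1 + α))
        ≤ (s * x) ^ 2 / 2 * x ^ (-(1 + α)) := mul_le_mul_of_nonneg_right hc hrp
      _ = s ^ 2 / 2 * (x ^ (2 : ℝ) * x ^ (-(1 + α))) := by
          rw [Real.rpow_two]; ring
      _ = s ^ 2 / 2 * x ^ (1 - α) := by
          rw [← Real.rpow_add hx0]; ring_nf
  have h1 : IntegrableOn (fun x : ℝ => (1 - Real.cos (s * x)) * x ^ (-(1 + α))) (Ioi 1) := by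
    have hg : IntegrableOn (fun x : ℝ => 2 * x ^ (-(1 + α))) (Ioi 1) :=
      (integrableOn_Ioi_rpow_of_lt (by linarith) one_pos).const_mul 2
    refine hg.mono' (hm.aestronglyMeasurable.restrict) ?_
    refine (ae_restrict_iff' measurableSet_Ioi).2 (Filter.Eventually.of_forall fun x hx => ?_)
    have hx0 : (0 : ℝ) < x := lt_trans one_pos hx
    have hc0 : 0 ≤ 1 - Real.cos (s * x) := by
      have := Real.cos_le_one (s * x); linarith
    have hc2 : 1 - Real.cos (s * x) ≤ 2 := by
      have := Real.neg_one_le_cos (s * x); linarith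
    have hrp : (0 : ℝ) ≤ x ^ (-(1 + α)) := rpow_nonneg hx0.le _
    rw [Real.norm_eq_abs, abs_of_nonneg (mul_nonneg hc0 hrp)]
    exact mul_le_mul_of_nonneg_right hc2 hrp
  have := h01.union h1
  rwa [Ioc_union_Ioi_eq_Ioi zero_le_one] at this

lemma fbm_scaling {α : ℝ} (hα : 0 < α) (s : ℝ) :
    ∫ x in Ioi (0:ℝ), (1 - Real.cos (s * x)) * x ^ (-(1 + α)) = |s| ^ α * fbmI α := by
  rcases eq_or_ne s 0 with rfl | hs
  · simp [Real.zero_rpow hα.ne']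
  set b := |s| with hb
  have hb0 : 0 < b := abs_pos.2 hs
  have step1 : ∫ x in Ioi (0:ℝ), (1 - Real.cos (s * x)) * x ^ (-(1 + α))
      = ∫ x in Ioi (0:ℝ), (1 - Real.cos (b * x)) * x ^ (-(1 + α)) := by
    refine setIntegral_congr_fun measurableSet_Ioi fun x hx => ?_
    rw [← Real.cos_abs (s * x), abs_mul, abs_of_pos (mem_Ioi.1 hx)]
  have step2 : ∫ x in Ioi (0:ℝ), (1 - Real.cos (b * x)) * (b * x) ^ (-(1 + α))
      = b⁻¹ • fbmI α := by
    have := MeasureTheory.integral_comp_mul_left_Ioi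
      (fun y : ℝ => (1 - Real.cos y) * y ^ (-(1 + α))) 0 hb0
    simpa [fbmI] using this
  have step3 : ∫ x in Ioi (0:ℝ), (1 - Real.cos (b * x)) * (b * x) ^ (-(1 + α))
      = b ^ (-(1 + α)) * ∫ x in Ioi (0:ℝ), (1 - Real.cos (b * x)) * x ^ (-(1 + α)) := by
    rw [← integral_const_mul]
    refine setIntegral_congr_fun measurableSet_Ioi fun x hx => ?_
    rw [Real.mul_rpow hb0.le (mem_Ioi.1 hx).le]; ring
  rw [step1]
  have hne : b ^ (-(1 + α)) ≠ 0 := (Real.rpow_pos_of_pos hb0 _).ne'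
  have : b ^ (-(1 + α)) * ∫ x in Ioi (0:ℝ), (1 - Real.cos (b * x)) * x ^ (-(1 + α))
      = b⁻¹ * fbmI α := by rw [← step3, step2, smul_eq_mul]
  have goal : ∫ x in Ioi (0:ℝ), (1 - Real.cos (b * x)) * x ^ (-(1 + α))
      = (b ^ (-(1 + α)))⁻¹ * (b⁻¹ * fbmI α) := by
    field_simp at this ⊢; linarith [this]
  have h1 : (b ^ (-(1 + α)))⁻¹ = b ^ (1 + α) := by
    rw [← Real.rpow_neg hb0.le, neg_neg]
  rw [goal, h1, ← Real.rpow_neg_one b, ← mul_assoc, ← Real.rpow_add hb0]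
  norm_num

lemma fbmI_pos {α : ℝ} (hα : 0 < α) (hα2 : α < 2) : 0 < fbmI α := by
  have hint : IntegrableOn (fun x : ℝ => (1 - Real.cos x) * x ^ (-(1 + α))) (Ioi 0) := by
    simpa using fbm_aux_integrable hα hα2 1
  set g := fun x : ℝ => (1 - Real.cos x) * x ^ (-(1 + α)) with hg
  have hsub : Ioc (π/2) π ⊆ Ioi (0:ℝ) := fun x hx => lt_of_lt_of_le (by positivity) hx.1.le
  have hlow : ∀ x ∈ Ioc (π/2) π, π ^ (-(1 + α)) ≤ g x := by
    intro x hx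
    have hx0 : (0:ℝ) < x := hsub hx
    have hcos : Real.cos x ≤ 0 :=
      Real.cos_nonpos_of_pi_div_two_le_of_le hx.1.le (by linarith [hx.2, pi_pos])
    have h1 : (1:ℝ) ≤ 1 - Real.cos x := by linarith
    have h2 : π ^ (-(1 + α)) ≤ x ^ (-(1 + α)) :=
      Real.rpow_le_rpow_of_nonpos hx0 hx.2 (by linarith)
    calc π ^ (-(1 + α)) ≤ x ^ (-(1 + α)) := h2
      _ = 1 * x ^ (-(1 + α)) := (one_mul _).symm
      _ ≤ (1 - Real.cos x) * x ^ (-(1 + α)) :=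
          mul_le_mul_of_nonneg_right h1 (rpow_nonneg hx0.le _)
  have hIoc : π ^ (-(1 + α)) * (volume (Ioc (π/2) π)).toReal ≤ ∫ x in Ioc (π/2) π, g x :=
    setIntegral_ge_of_const_le_real measurableSet_Ioc (by simp) hlow
      (hint.mono hsub le_rfl)
  have hmono : ∫ x in Ioc (π/2) π, g x ≤ ∫ x in Ioi (0:ℝ), g x := by
    refine setIntegral_mono_set hint ?_ (HasSubset.Subset.eventuallyLE hsub)
    refine (ae_restrict_iff' measurableSet_Ioi).2 (Filter.Eventually.of_forall fun x hx => ?_)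
    have := Real.cos_le_one x
    exact mul_nonneg (by linarith) (rpow_nonneg (le_of_lt hx) _)
  have hvol : (volume (Ioc (π/2) π)).toReal = π/2 := by
    rw [Real.volume_Ioc, ENNReal.toReal_ofReal (by linarith [pi_pos])]
    ring
  have hcpos : 0 < π ^ (-(1 + α)) * (volume (Ioc (π/2) π)).toReal := by
    rw [hvol]
    exact mul_pos (Real.rpow_pos_of_pos pi_pos _) (by positivity)
  calc (0:ℝ) < _ := hcpos
    _ ≤ ∫ x in Ioc (π/2) π, g x := hIoc
    _ ≤ fbmI α := hmono

/-- The covariance function of fractional Brownian motion with Hurst parameter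
`0 < H ≤ 1`, `ρ^H(s,t) = (|t|^{2H} + |s|^{2H} - |t-s|^{2H})/2`, is positive
semidefinite on `ℝ × ℝ`. -/
theorem fbm_covariance_posSemidef (H : ℝ) (hH0 : 0 < H) (hH1 : H ≤ 1)
    (n : ℕ) (t : Fin n → ℝ) (c : Fin n → ℝ) :
    0 ≤ ∑ i, ∑ j, c i * c j *
      ((1 / 2) * (|t j| ^ (2 * H) + |t i| ^ (2 * H) - |t j - t i| ^ (2 * H))) := by
  rcases lt_or_eq_of_le hH1 with hH | hH
  · -- case H < 1
    set α : ℝ := 2 * H with hαdef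
    have hα : 0 < α := by positivity
    have hα2 : α < 2 := by simp only [hαdef]; linarith
    have hI := fbmI_pos hα hα2
    -- the kernel
    set K : Fin n → Fin n → ℝ → ℝ := fun i j x =>
      ((1 - Real.cos (t i * x)) * (1 - Real.cos (t j * x)) +
        Real.sin (t i * x) * Real.sin (t j * x)) * x ^ (-(1 + α)) with hK
    have eK : ∀ i j (x : ℝ), K i j x =
        ((1 - Real.cos (t j * x)) * x ^ (-(1 + α)) +
          (1 - Real.cos (t i * x)) * x ^ (-(1 + α))) -
          (1 - Real.cos ((t j - t i) * x)) * x ^ (-(1 + α)) := by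
      intro i j x
      rw [hK, show (t j - t i) * x = t j * x - t i * x by ring, Real.cos_sub]
      ring
    have Kint : ∀ i j, IntegrableOn (K i j) (Ioi 0) := by
      intro i j
      have : K i j = fun x =>
          ((1 - Real.cos (t j * x)) * x ^ (-(1 + α)) +
            (1 - Real.cos (t i * x)) * x ^ (-(1 + α))) -
            (1 - Real.cos ((t j - t i) * x)) * x ^ (-(1 + α)) := funext (eK i j)
      rw [this]
      exact ((fbm_aux_integrable hα hα2 (t j)).add
        (fbm_aux_integrable hα hα2 (t i))).sub (fbm_aux_integrable hα hα2 (t j - t i))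
    set J : Fin n → Fin n → ℝ := fun i j => ∫ x in Ioi (0:ℝ), K i j x with hJ
    have claimA : ∀ i j, J i j =
        (|t j| ^ α + |t i| ^ α - |t j - t i| ^ α) * fbmI α := by
      intro i j
      have : J i j = ∫ x in Ioi (0:ℝ),
          (((1 - Real.cos (t j * x)) * x ^ (-(1 + α)) +
            (1 - Real.cos (t i * x)) * x ^ (-(1 + α))) -
            (1 - Real.cos ((t j - t i) * x)) * x ^ (-(1 + α))) := by
        simp only [hJ]
        exact integral_congr_ae (Filter.Eventually.of_forall fun x => eK i j x)
      have h1 := fbm_aux_integrable hα hα2 (t j)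
      have h2 := fbm_aux_integrable hα hα2 (t i)
      have h3 := fbm_aux_integrable hα hα2 (t j - t i)
      have h12 : IntegrableOn (fun x : ℝ => (1 - Real.cos (t j * x)) * x ^ (-(1 + α)) +
          (1 - Real.cos (t i * x)) * x ^ (-(1 + α))) (Ioi 0) := h1.add h2
      rw [this, integral_sub h12 h3, integral_add h1 h2,
        fbm_scaling hα, fbm_scaling hα, fbm_scaling hα]
      ring
    have claimB : 0 ≤ ∑ i, ∑ j, c i * c j * J i j := by
      have inner : ∀ i, ∑ j, c i * c j * J i j
          = ∫ x in Ioi (0:ℝ), ∑ j, c i * c j * K i j x := by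
        intro i
        rw [integral_finset_sum Finset.univ
          (fun j _ => ((Kint i j).const_mul (c i * c j)))]
        simp only [hJ, integral_const_mul]
      have outer : ∑ i, ∑ j, c i * c j * J i j
          = ∫ x in Ioi (0:ℝ), ∑ i, ∑ j, c i * c j * K i j x := by
        simp_rw [inner]
        rw [integral_finset_sum Finset.univ (fun i _ =>
          integrable_finset_sum Finset.univ
            (fun j _ => ((Kint i j).const_mul (c i * c j))))]
      rw [outer]
      refine setIntegral_nonneg measurableSet_Ioi fun x hx => ?_
      have hx0 : (0:ℝ) < x := hx
      have sumId : ∑ i, ∑ j, c i * c j * K i j x =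
          ((∑ i, c i * (1 - Real.cos (t i * x)))^2 +
            (∑ i, c i * Real.sin (t i * x))^2) * x ^ (-(1 + α)) := by
        have trig : ∑ i, ∑ j, c i * c j *
            ((1 - Real.cos (t i * x)) * (1 - Real.cos (t j * x)) +
              Real.sin (t i * x) * Real.sin (t j * x)) =
            (∑ i, c i * (1 - Real.cos (t i * x)))^2 +
              (∑ i, c i * Real.sin (t i * x))^2 := by
          rw [sq, sq, Finset.sum_mul_sum, Finset.sum_mul_sum, ← Finset.sum_add_distrib]
          refine Finset.sum_congr rfl fun i _ => ?_
          rw [← Finset.sum_add_distrib]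
          exact Finset.sum_congr rfl fun j _ => by ring
        calc ∑ i, ∑ j, c i * c j * K i j x
            = ∑ i, ∑ j, (c i * c j *
              ((1 - Real.cos (t i * x)) * (1 - Real.cos (t j * x)) +
                Real.sin (t i * x) * Real.sin (t j * x))) * x ^ (-(1 + α)) := by
              refine Finset.sum_congr rfl fun i _ => Finset.sum_congr rfl fun j _ => ?_
              rw [hK]; ring
          _ = (∑ i, ∑ j, c i * c j *
              ((1 - Real.cos (t i * x)) * (1 - Real.cos (t j * x)) +
                Real.sin (t i * x) * Real.sin (t j * x))) * x ^ (-(1 + α)) := by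
              simp_rw [← Finset.sum_mul]
          _ = _ := by rw [trig]
      rw [sumId]
      exact mul_nonneg (add_nonneg (sq_nonneg _) (sq_nonneg _)) (rpow_nonneg hx0.le _)
    have key : ∀ i j, c i * c j *
        ((1 / 2) * (|t j| ^ (2 * H) + |t i| ^ (2 * H) - |t j - t i| ^ (2 * H)))
        = (1 / (2 * fbmI α)) * (c i * c j * J i j) := by
      intro i j
      rw [claimA i j]
      have : |t j| ^ (2 * H) + |t i| ^ (2 * H) - |t j - t i| ^ (2 * H)
          = |t j| ^ α + |t i| ^ α - |t j - t i| ^ α := by rw [hαdef]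
      rw [this]
      field_simp
    simp_rw [hαdef, key, ← Finset.mul_sum]
    exact mul_nonneg (by positivity) claimB
  · -- case H = 1
    subst hH
    have key : ∀ i j, c i * c j *
        ((1 / 2) * (|t j| ^ (2 * (1:ℝ)) + |t i| ^ (2 * (1:ℝ)) - |t j - t i| ^ (2 * (1:ℝ))))
        = (c i * t i) * (c j * t j) := by
      intro i j
      have h2 : (2 * (1:ℝ)) = ((2:ℕ) : ℝ) := by norm_num
      rw [h2, Real.rpow_natCast, Real.rpow_natCast, Real.rpow_natCast,
        sq_abs, sq_abs, sq_abs]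
      ring
    simp_rw [key]
    rw [← Finset.sum_mul_sum]
    exact mul_self_nonneg _
end

section
/- Let W^H be a fractional Brownian motion with Hurst parameter H ∈ (1/2, 1], i.e., a continuous centered Gaussian process with covariance ρ^H(s,t) = (1/2)(s^{2H} + t^{2H} - |t-s|^{2H}) for s,t ≥ 0. Define X_t = e^{-α t}(X_0 - m) + m + ν W^H_t - α ∫_0^t e^{-α(t-s)} ν W^H_s ds, where α, ν > 0 and X_0, m ∈ ℝ are constants. Then X is a Gaussian process with mean E[X_t] = e^{-α t}(X_0 - m) + m and covariance Cov(X_s, X_t) = ν²( ρ^H(s,t) - α ∫_0^t e^{-α(t-x)} ρ^H(s,x) dx - α ∫_0^s e^{-α(s-x)} ρ^H(t,x) dx + α² ∫_0^t ∫_0^s e^{-α((s-x)+(t-y))} ρ^H(x,y) dx dy ). -/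
open Real MeasureTheory ProbabilityTheory intervalIntegral

section Helpers
open Filter Topology Finset BoundedContinuousFunction

/-- Riemann sum of `g` on `[0,T]` with `n` equal subintervals, left endpoints. -/
noncomputable def rSum (g : ℝ → ℝ) (T : ℝ) (n : ℕ) : ℝ :=
  ∑ k ∈ Finset.range n, (T / n) * g (k * T / n)

lemma rSum_tendsto {g : ℝ → ℝ} {T : ℝ} (hT : 0 ≤ T) (hg : Continuous g) :
    Tendsto (rSum g T) atTop (𝓝 (∫ s in (0:ℝ)..T, g s)) := by
  rcases eq_or_lt_of_le hT with rfl | hT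
  · have : rSum g 0 = fun _ => (0:ℝ) := by funext n; simp [rSum]
    rw [this, intervalIntegral.integral_same]
    exact tendsto_const_nhds
  rw [Metric.tendsto_atTop]
  intro ε hε
  -- uniform continuity on [0, T]
  have hUC : UniformContinuousOn g (Set.Icc 0 T) :=
    (isCompact_Icc).uniformContinuousOn_of_continuous hg.continuousOn
  rw [Metric.uniformContinuousOn_iff] at hUC
  have hε2 : 0 < ε / (2 * T) := by positivity
  obtain ⟨δ, hδ, hδ'⟩ := hUC (ε / (2 * T)) hε2
  obtain ⟨N, hN⟩ := exists_nat_gt (T / δ)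
  refine ⟨N + 1, fun n hn => ?_⟩
  have hn1 : 1 ≤ n := le_trans (Nat.le_add_left 1 N) hn
  have hnpos : (0:ℝ) < n := by exact_mod_cast hn1
  have hTn : T / n < δ := by
    rw [div_lt_iff₀ hnpos]
    have h1 : (N:ℝ) < n := by exact_mod_cast lt_of_lt_of_le (Nat.lt_succ_self N) hn
    have h2 : T / δ < n := lt_trans hN h1
    calc T = T / δ * δ := by field_simp
    _ < n * δ := by exact mul_lt_mul_of_pos_right h2 hδ
    _ = δ * n := by ring
  set x : ℕ → ℝ := fun k => k * T / n with hx
  have hx0 : x 0 = 0 := by simp [hx]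
  have hxn : x n = T := by simp only [hx]; field_simp [hnpos.ne']
  have hxmem : ∀ k ≤ n, x k ∈ Set.Icc (0:ℝ) T := by
    intro k hk
    constructor
    · positivity
    · rw [hx]
      rw [div_le_iff₀ hnpos]
      have : (k:ℝ) ≤ n := by exact_mod_cast hk
      calc (k:ℝ) * T ≤ n * T := by nlinarith
      _ = T * n := by ring
  have hsplit : ∑ k ∈ Finset.range n, ∫ s in x k..x (k+1), g s = ∫ s in (0:ℝ)..T, g s := by
    rw [sum_integral_adjacent_intervals (fun k _ => hg.intervalIntegrable _ _)]
    rw [hx0, hxn]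
  have hstep : ∀ k, x (k+1) - x k = T / n := by
    intro k; rw [hx]; push_cast; ring
  rw [dist_eq_norm, ← hsplit, rSum, ← Finset.sum_sub_distrib]
  have hbound : ∀ k ∈ Finset.range n,
      ‖(T / n) * g (x k) - ∫ s in x k..x (k+1), g s‖ ≤ ε / (2 * T) * (T / n) := by
    intro k hk
    rw [Finset.mem_range] at hk
    have hconst : (T / n) * g (x k) = ∫ s in x k..x (k+1), g (x k) := by
      rw [intervalIntegral.integral_const, hstep k, smul_eq_mul, mul_comm]
    rw [hconst, ← intervalIntegral.integral_sub (intervalIntegrable_const)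
      (hg.intervalIntegrable _ _)]
    have hxk : x k ∈ Set.Icc (0:ℝ) T := hxmem k hk.le
    have hxk1 : x (k+1) ∈ Set.Icc (0:ℝ) T := hxmem (k+1) hk
    have hle : x k ≤ x (k+1) := by nlinarith [hstep k, div_nonneg hT.le hnpos.le]
    have := intervalIntegral.norm_integral_le_of_norm_le_const
      (f := fun s => g (x k) - g s) (C := ε / (2 * T)) (a := x k) (b := x (k+1)) ?_
    · calc ‖∫ s in x k..x (k+1), (g (x k) - g s)‖ ≤ ε / (2*T) * |x (k+1) - x k| := this
        _ = ε / (2 * T) * (T / n) := by rw [hstep k, abs_of_nonneg (by positivity)]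
    · intro s hs
      rw [Set.uIoc_of_le hle] at hs
      have hsI : s ∈ Set.Icc (0:ℝ) T :=
        ⟨le_trans hxk.1 hs.1.le, le_trans hs.2 hxk1.2⟩
      have hdist : dist (x k) s < δ := by
        rw [Real.dist_eq, abs_sub_comm, abs_of_nonneg (by linarith [hs.1.le])]
        have : s - x k ≤ T / n := by linarith [hs.2, hstep k]
        linarith
      have := hδ' (x k) hxk s hsI hdist
      rw [Real.dist_eq] at this
      exact this.le
  calc ‖∑ k ∈ Finset.range n, ((T / n) * g (x k) - ∫ s in x k..x (k+1), g s)‖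
      ≤ ∑ k ∈ Finset.range n, ‖(T / n) * g (x k) - ∫ s in x k..x (k+1), g s‖ :=
        norm_sum_le _ _
    _ ≤ ∑ _k ∈ Finset.range n, ε / (2 * T) * (T / n) := Finset.sum_le_sum hbound
    _ = n * (ε / (2 * T) * (T / n)) := by rw [Finset.sum_const, card_range]; ring
    _ = ε / 2 := by field_simp
    _ < ε := by linarith

lemma rSum2_tendsto {h : ℝ → ℝ → ℝ} {S T : ℝ} (hS : 0 ≤ S) (hT : 0 ≤ T)
    (hh : Continuous fun p : ℝ × ℝ => h p.1 p.2) :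
    Tendsto (fun n : ℕ => ∑ l ∈ Finset.range n, (T/n) * ∑ k ∈ Finset.range n, (S/n) * h (k*S/n) (l*T/n))
      atTop (𝓝 (∫ y in (0:ℝ)..T, ∫ x in (0:ℝ)..S, h x y)) := by
  have hGcont : Continuous fun y => ∫ x in (0:ℝ)..S, h x y := by
    apply intervalIntegral.continuous_parametric_intervalIntegral_of_continuous'
      (f := fun y x => h x y)
    exact hh.comp (continuous_swap)
  set G : ℝ → ℝ := fun y => ∫ x in (0:ℝ)..S, h x y with hG
  rcases eq_or_lt_of_le hT with rfl | hTpos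
  · have : (fun n : ℕ => ∑ l ∈ Finset.range n, ((0:ℝ)/n) * ∑ k ∈ Finset.range n, (S/n) * h (k*S/n) (l*0/n)) = fun _ => (0:ℝ) := by
      funext n; simp
    rw [this, intervalIntegral.integral_same]
    exact tendsto_const_nhds
  rcases eq_or_lt_of_le hS with rfl | hSpos
  · have h1 : (fun n : ℕ => ∑ l ∈ Finset.range n, (T/n) * ∑ k ∈ Finset.range n, ((0:ℝ)/n) * h (k*0/n) (l*T/n)) = fun _ => (0:ℝ) := by
      funext n; simp
    have h2 : ∫ y in (0:ℝ)..T, ∫ x in (0:ℝ)..(0:ℝ), h x y = 0 := by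
      simp
    rw [h1, h2]
    exact tendsto_const_nhds
  rw [Metric.tendsto_atTop]
  intro ε hε
  have hUC : UniformContinuousOn (fun p : ℝ × ℝ => h p.1 p.2)
      (Set.Icc 0 S ×ˢ Set.Icc 0 T) :=
    (isCompact_Icc.prod isCompact_Icc).uniformContinuousOn_of_continuous hh.continuousOn
  rw [Metric.uniformContinuousOn_iff] at hUC
  have hε2 : 0 < ε / (2 * S * T) := by positivity
  obtain ⟨δ, hδ, hδ'⟩ := hUC (ε / (2 * S * T)) hε2
  obtain ⟨N, hN⟩ := exists_nat_gt (max S T / δ)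
  refine ⟨N + 1, fun n hn => ?_⟩
  have hn1 : 1 ≤ n := le_trans (Nat.le_add_left 1 N) hn
  have hnpos : (0:ℝ) < n := by exact_mod_cast hn1
  have hNn : max S T / δ < n := by
    have h1 : (N:ℝ) < n := by exact_mod_cast lt_of_lt_of_le (Nat.lt_succ_self N) hn
    linarith
  have hSn : S / n < δ := by
    rw [div_lt_iff₀ hnpos]
    have := (div_lt_iff₀ hδ).mp (lt_of_le_of_lt (by
      exact div_le_div_of_nonneg_right (le_max_left S T) hδ.le) hNn)
    nlinarith [le_max_left S T]
  have hTn : T / n < δ := by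
    rw [div_lt_iff₀ hnpos]
    nlinarith [le_max_right S T, (div_lt_iff₀ hδ).mp (lt_of_le_of_lt
      (div_le_div_of_nonneg_right (le_max_right S T) hδ.le) hNn)]
  set x : ℕ → ℝ := fun k => k * S / n with hx
  set y : ℕ → ℝ := fun l => l * T / n with hy
  have hxstep : ∀ k, x (k+1) - x k = S / n := by intro k; rw [hx]; push_cast; ring
  have hystep : ∀ l, y (l+1) - y l = T / n := by intro l; rw [hy]; push_cast; ring
  have hxmem : ∀ k ≤ n, x k ∈ Set.Icc (0:ℝ) S := by
    intro k hk
    refine ⟨by positivity, ?_⟩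
    rw [hx, div_le_iff₀ hnpos]
    have : (k:ℝ) ≤ n := by exact_mod_cast hk
    nlinarith
  have hymem : ∀ l ≤ n, y l ∈ Set.Icc (0:ℝ) T := by
    intro l hl
    refine ⟨by positivity, ?_⟩
    rw [hy, div_le_iff₀ hnpos]
    have : (l:ℝ) ≤ n := by exact_mod_cast hl
    nlinarith
  have hxle : ∀ k, x k ≤ x (k+1) := by
    intro k
    nlinarith [hxstep k, div_nonneg hS hnpos.le]
  have hyle : ∀ l, y l ≤ y (l+1) := by
    intro l
    nlinarith [hystep l, div_nonneg hT hnpos.le]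
  have hy0 : y 0 = 0 := by simp [hy]
  have hyn : y n = T := by simp only [hy]; field_simp [hnpos.ne']
  have hsplitO : ∑ l ∈ Finset.range n, ∫ s in y l..y (l+1), G s = ∫ s in (0:ℝ)..T, G s := by
    rw [sum_integral_adjacent_intervals (fun l _ => hGcont.intervalIntegrable _ _), hy0, hyn]
  rw [dist_eq_norm]
  have hrw : ∑ l ∈ Finset.range n, (T/n) * ∑ k ∈ Finset.range n, ((S:ℝ)/n) * h ((k:ℕ)*S/n) ((l:ℕ)*T/n)
      - ∫ s in (0:ℝ)..T, G s
      = ∑ l ∈ Finset.range n, ((T/n) * ∑ k ∈ Finset.range n, (S/n) * h (x k) (y l)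
          - ∫ s in y l..y (l+1), G s) := by
    rw [Finset.sum_sub_distrib, hsplitO]
  rw [hrw]
  -- bound each l-term
  have hbound : ∀ l ∈ Finset.range n,
      ‖(T/n) * ∑ k ∈ Finset.range n, (S/n) * h (x k) (y l) - ∫ s in y l..y (l+1), G s‖
      ≤ ε / (2 * S * T) * S * (T / n) := by
    intro l hl
    rw [Finset.mem_range] at hl
    set c : ℝ := ∑ k ∈ Finset.range n, (S/n) * h (x k) (y l) with hc
    have hconst : (T/n) * c = ∫ s in y l..y (l+1), c := by
      rw [intervalIntegral.integral_const, hystep l, smul_eq_mul, mul_comm]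
    rw [hconst, ← intervalIntegral.integral_sub intervalIntegrable_const
      (hGcont.intervalIntegrable _ _)]
    have hbnd : ∀ s ∈ Set.uIoc (y l) (y (l+1)), ‖c - G s‖ ≤ ε / (2 * S * T) * S := by
      intro s hs
      rw [Set.uIoc_of_le (hyle l)] at hs
      have hsT : s ∈ Set.Icc (0:ℝ) T := by
        have h1 := (hymem l hl.le).1
        have h2 := (hymem (l+1) hl).2
        exact ⟨le_trans h1 hs.1.le, le_trans hs.2 h2⟩
      -- split G s over the x-grid
      have hcont_u : Continuous fun u : ℝ => h u s := by
        exact hh.comp (continuous_id.prodMk continuous_const)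
      have hGs : G s = ∑ k ∈ Finset.range n, ∫ u in x k..x (k+1), h u s := by
        rw [sum_integral_adjacent_intervals (f := fun u => h u s)
          (fun k _ => (hcont_u.intervalIntegrable _ _)), hG]
        have hx0 : x 0 = 0 := by simp [hx]
        have hxn : x n = S := by simp only [hx]; field_simp [hnpos.ne']
        rw [hx0, hxn]
      have hck : c = ∑ k ∈ Finset.range n, ∫ u in x k..x (k+1), h (x k) (y l) := by
        rw [hc]
        congr 1
        funext k
        rw [intervalIntegral.integral_const, hxstep k, smul_eq_mul, mul_comm]
      rw [hGs, hck, ← Finset.sum_sub_distrib]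
      calc ‖∑ k ∈ Finset.range n, ((∫ u in x k..x (k+1), h (x k) (y l)) - ∫ u in x k..x (k+1), h u s)‖
          ≤ ∑ k ∈ Finset.range n, ‖(∫ u in x k..x (k+1), h (x k) (y l)) - ∫ u in x k..x (k+1), h u s‖ := norm_sum_le _ _
        _ ≤ ∑ _k ∈ Finset.range n, ε / (2 * S * T) * (S / n) := by
            apply Finset.sum_le_sum
            intro k hk
            rw [Finset.mem_range] at hk
            rw [← intervalIntegral.integral_sub intervalIntegrable_const
              (hcont_u.intervalIntegrable _ _)]
            have := intervalIntegral.norm_integral_le_of_norm_le_const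
              (f := fun u => h (x k) (y l) - h u s) (C := ε / (2 * S * T))
              (a := x k) (b := x (k+1)) ?_
            · calc ‖∫ u in x k..x (k+1), (h (x k) (y l) - h u s)‖
                  ≤ ε / (2*S*T) * |x (k+1) - x k| := this
                _ = ε / (2 * S * T) * (S / n) := by
                    rw [hxstep k, abs_of_nonneg (by positivity)]
            · intro u hu
              rw [Set.uIoc_of_le (hxle k)] at hu
              have huS : u ∈ Set.Icc (0:ℝ) S := by
                have h1 := (hxmem k hk.le).1
                have h2 := (hxmem (k+1) hk).2
                exact ⟨le_trans h1 hu.1.le, le_trans hu.2 h2⟩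
              have hp1 : ((x k, y l) : ℝ × ℝ) ∈ Set.Icc (0:ℝ) S ×ˢ Set.Icc (0:ℝ) T :=
                ⟨hxmem k hk.le, hymem l hl.le⟩
              have hp2 : ((u, s) : ℝ × ℝ) ∈ Set.Icc (0:ℝ) S ×ˢ Set.Icc (0:ℝ) T := ⟨huS, hsT⟩
              have hdist : dist ((x k, y l) : ℝ × ℝ) (u, s) < δ := by
                rw [Prod.dist_eq]
                apply max_lt
                · rw [Real.dist_eq, abs_sub_comm, abs_of_nonneg (by linarith [hu.1.le])]
                  have := hu.2
                  have := hxstep k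
                  linarith
                · rw [Real.dist_eq, abs_sub_comm, abs_of_nonneg (by linarith [hs.1.le])]
                  have := hs.2
                  have := hystep l
                  linarith
              have := hδ' _ hp1 _ hp2 hdist
              rw [Real.dist_eq] at this
              exact this.le
        _ = n * (ε / (2 * S * T) * (S / n)) := by rw [Finset.sum_const, card_range]; ring
        _ = ε / (2 * S * T) * S := by field_simp
    have := intervalIntegral.norm_integral_le_of_norm_le_const
      (f := fun s => c - G s) (C := ε / (2 * S * T) * S) (a := y l) (b := y (l+1)) hbnd
    calc ‖∫ s in y l..y (l+1), (c - G s)‖ ≤ ε / (2*S*T) * S * |y (l+1) - y l| := this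
      _ = ε / (2 * S * T) * S * (T / n) := by rw [hystep l, abs_of_nonneg (by positivity)]
  calc ‖∑ l ∈ Finset.range n, ((T/n) * ∑ k ∈ Finset.range n, (S/n) * h (x k) (y l)
          - ∫ s in y l..y (l+1), G s)‖
      ≤ ∑ l ∈ Finset.range n, ‖(T/n) * ∑ k ∈ Finset.range n, (S/n) * h (x k) (y l)
          - ∫ s in y l..y (l+1), G s‖ := norm_sum_le _ _
    _ ≤ ∑ _l ∈ Finset.range n, ε / (2 * S * T) * S * (T / n) := Finset.sum_le_sum hbound
    _ = n * (ε / (2 * S * T) * S * (T / n)) := by rw [Finset.sum_const, card_range]; ring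
    _ = ε / 2 := by field_simp
    _ < ε := by linarith

lemma gaussianReal_eq_map_affine (μ : ℝ) (v : NNReal) :
    gaussianReal μ v = Measure.map (fun x => Real.sqrt v * x + μ) (gaussianReal 0 1) := by
  have h1 : Measure.map (fun x : ℝ => Real.sqrt v * x) (gaussianReal 0 1)
      = gaussianReal 0 v := by
    rw [gaussianReal_map_const_mul (Real.sqrt v)]
    congr 1
    · ring
    · ext
      simp [Real.sq_sqrt v.2]
  have hm1 : Measurable fun x : ℝ => x + μ := by fun_prop
  have hm2 : Measurable fun x : ℝ => Real.sqrt v * x := by fun_prop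
  have : (fun x : ℝ => Real.sqrt v * x + μ)
      = (fun x => x + μ) ∘ (fun x => Real.sqrt v * x) := rfl
  rw [this, ← Measure.map_map hm1 hm2, h1, gaussianReal_map_add_const μ, zero_add]

lemma lintegral_bcf_gaussianReal_tendsto {v : ℕ → NNReal} {vL : NNReal}
    (hv : Tendsto v atTop (𝓝 vL)) (μ : ℝ) (f : ℝ →ᵇ NNReal) :
    Tendsto (fun n => ∫⁻ x, f x ∂(gaussianReal μ (v n))) atTop
      (𝓝 (∫⁻ x, f x ∂(gaussianReal μ vL))) := by
  have hmap : ∀ w : NNReal, ∫⁻ x, f x ∂(gaussianReal μ w)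
      = ∫⁻ x, f (Real.sqrt w * x + μ) ∂(gaussianReal 0 1) := by
    intro w
    have hg : Measurable fun x : ℝ => Real.sqrt w * x + μ := by fun_prop
    rw [gaussianReal_eq_map_affine μ w, lintegral_map
      (by exact measurable_coe_nnreal_ennreal.comp f.continuous.measurable) hg]
  simp_rw [hmap]
  -- dominated convergence
  obtain ⟨C, hC⟩ : ∃ C : NNReal, ∀ x : ℝ, f x ≤ C := by
    obtain ⟨C, hC⟩ := f.bounded
    refine ⟨f 0 + ⟨C, le_trans dist_nonneg (hC 0 0)⟩, fun x => ?_⟩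
    have := hC x 0
    have hd : dist (f x) (f 0) = |((f x : ℝ)) - (f 0 : ℝ)| := NNReal.dist_eq _ _
    rw [hd] at this
    have : (f x : ℝ) ≤ (f 0 : ℝ) + C := by
      cases' abs_le.mp this with h1 h2
      linarith
    exact_mod_cast this
  apply tendsto_lintegral_of_dominated_convergence (fun _ => (C : ENNReal))
  · intro n
    exact (measurable_coe_nnreal_ennreal.comp (f.continuous.measurable.comp
      ((measurable_const.mul measurable_id).add_const μ)))
  · intro n
    exact Eventually.of_forall fun x => ENNReal.coe_le_coe.mpr (hC _)
  · simp
  · apply Eventually.of_forall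
    intro x
    have hcont : Continuous fun w : NNReal => ((f (Real.sqrt w * x + μ) : NNReal) : ENNReal) := by
      apply ENNReal.continuous_coe.comp
      apply f.continuous.comp
      continuity
    exact (hcont.tendsto vL).comp hv

lemma gaussian_limit {Ω : Type*} [MeasurableSpace Ω] (P : Measure Ω) [IsProbabilityMeasure P]
    {Z : ℕ → Ω → ℝ} {Z' : Ω → ℝ} (hZm : ∀ n, Measurable (Z n))
    {μ : ℝ} {v : ℕ → NNReal} {vL : NNReal}
    (hZg : ∀ n, Measure.map (Z n) P = gaussianReal μ (v n))
    (hv : Tendsto v atTop (𝓝 vL))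
    (hae : ∀ᵐ ω ∂P, Tendsto (fun n => Z n ω) atTop (𝓝 (Z' ω))) :
    Measure.map Z' P = gaussianReal μ vL := by
  have hZ'm : AEMeasurable Z' P :=
    aemeasurable_of_tendsto_metrizable_ae atTop (fun n => (hZm n).aemeasurable) hae
  haveI : IsProbabilityMeasure (Measure.map Z' P) := Measure.isProbabilityMeasure_map hZ'm
  apply ext_of_forall_lintegral_eq_of_IsFiniteMeasure
  intro f
  -- the sequence of lintegrals
  have key1 : Tendsto (fun n => ∫⁻ x, f x ∂(gaussianReal μ (v n))) atTop
      (𝓝 (∫⁻ x, f x ∂(gaussianReal μ vL))) := lintegral_bcf_gaussianReal_tendsto hv μ f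
  have key2 : Tendsto (fun n => ∫⁻ x, f x ∂(Measure.map (Z n) P)) atTop
      (𝓝 (∫⁻ x, f x ∂(Measure.map Z' P))) := by
    have hrw : ∀ n, ∫⁻ x, f x ∂(Measure.map (Z n) P) = ∫⁻ ω, f (Z n ω) ∂P := fun n =>
      lintegral_map (measurable_coe_nnreal_ennreal.comp f.continuous.measurable) (hZm n)
    have hrw' : ∫⁻ x, f x ∂(Measure.map Z' P) = ∫⁻ ω, f (Z' ω) ∂P :=
      lintegral_map' (measurable_coe_nnreal_ennreal.comp f.continuous.measurable).aemeasurable hZ'm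
    rw [hrw']
    simp_rw [hrw]
    obtain ⟨C, hC⟩ : ∃ C : NNReal, ∀ x : ℝ, f x ≤ C := by
      obtain ⟨C, hC⟩ := f.bounded
      refine ⟨f 0 + ⟨C, le_trans dist_nonneg (hC 0 0)⟩, fun x => ?_⟩
      have := hC x 0
      rw [NNReal.dist_eq] at this
      have : (f x : ℝ) ≤ (f 0 : ℝ) + C := by
        cases' abs_le.mp this with h1 h2
        linarith
      exact_mod_cast this
    apply tendsto_lintegral_of_dominated_convergence (fun _ => (C : ENNReal))
    · intro n
      exact measurable_coe_nnreal_ennreal.comp (f.continuous.measurable.comp (hZm n))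
    · intro n
      exact Eventually.of_forall fun ω => ENNReal.coe_le_coe.mpr (hC _)
    · simp
    · filter_upwards [hae] with ω hω
      exact (ENNReal.continuous_coe.tendsto _).comp ((f.continuous.tendsto _).comp hω)
  simp_rw [hZg] at key2
  exact tendsto_nhds_unique key2 key1

end Helpers

/-- Let `W^H` be a fractional Brownian motion with `H ∈ (1/2, 1]` (a continuous centered
Gaussian process with covariance `ρ^H(s,t) = (s^{2H} + t^{2H} - |t-s|^{2H})/2`, expressed
via the linear-combination characterization). Then the fractional OU process
`X_t = e^{-αt}(X₀-m) + m + ν W^H_t - α ∫_0^t e^{-α(t-s)} ν W^H_s ds` is a Gaussian process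
with mean `e^{-αt}(X₀-m) + m` and the stated covariance. -/
theorem fractional_OU_is_gaussian
    {Ω : Type*} [MeasureSpace Ω] (P : Measure Ω) [IsProbabilityMeasure P]
    (H : ℝ) (hH : 1 / 2 < H) (hH1 : H ≤ 1)
    (ρH : ℝ → ℝ → ℝ)
    (hρH : ∀ s t : ℝ, ρH s t = (1 / 2) * (s ^ (2 * H) + t ^ (2 * H) - |t - s| ^ (2 * H)))
    (W : ℝ → Ω → ℝ) (hWmeas : ∀ t, Measurable (W t))
    (hW0 : ∀ᵐ ω ∂P, W 0 ω = 0)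
    (hWcont : ∀ᵐ ω ∂P, Continuous (fun t => W t ω))
    (hWgauss : ∀ (n : ℕ) (t : Fin n → ℝ) (c : Fin n → ℝ), (∀ i, 0 ≤ t i) →
      Measure.map (fun ω => ∑ i, c i * W (t i) ω) P =
        gaussianReal 0 (∑ i, ∑ j, c i * c j * ρH (t i) (t j)).toNNReal)
    (α ν : ℝ) (hα : 0 < α) (hν : 0 < ν) (X₀ m : ℝ)
    (X : ℝ → Ω → ℝ)
    (hX : ∀ t (ω : Ω), X t ω =
      Real.exp (-α * t) * (X₀ - m) + m + ν * W t ω -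
        α * ∫ s in (0 : ℝ)..t, Real.exp (-α * (t - s)) * ν * W s ω)
    (M : ℝ → ℝ) (hM : ∀ t, M t = Real.exp (-α * t) * (X₀ - m) + m)
    (R : ℝ → ℝ → ℝ)
    (hR : ∀ s t : ℝ, R s t = ν ^ 2 *
      (ρH s t - α * (∫ x in (0 : ℝ)..t, Real.exp (-α * (t - x)) * ρH s x)
        - α * (∫ x in (0 : ℝ)..s, Real.exp (-α * (s - x)) * ρH t x)
        + α ^ 2 * ∫ y in (0 : ℝ)..t, ∫ x in (0 : ℝ)..s,
            Real.exp (-α * ((s - x) + (t - y))) * ρH x y)) :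
    ∀ (n : ℕ) (t : Fin n → ℝ) (c : Fin n → ℝ), (∀ i, 0 ≤ t i) →
      Measure.map (fun ω => ∑ i, c i * X (t i) ω) P =
        gaussianReal (∑ i, c i * M (t i))
          (∑ i, ∑ j, c i * c j * R (t i) (t j)).toNNReal := by
  classical
  -- generalize the Gaussian hypothesis to arbitrary finite index types
  have hWgauss' : ∀ (ι : Type) (_ : Fintype ι) (τ : ι → ℝ) (d : ι → ℝ), (∀ i, 0 ≤ τ i) →
      Measure.map (fun ω => ∑ i, d i * W (τ i) ω) P =
        gaussianReal 0 (∑ i, ∑ j, d i * d j * ρH (τ i) (τ j)).toNNReal := by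
    intro ι _ τ d hτ
    have e := Fintype.equivFin ι
    have h0 := hWgauss (Fintype.card ι) (τ ∘ e.symm) (d ∘ e.symm) (fun i => hτ _)
    have h1 : (fun ω => ∑ i, (d ∘ e.symm) i * W ((τ ∘ e.symm) i) ω)
        = (fun ω => ∑ i, d i * W (τ i) ω) := by
      funext ω
      exact Equiv.sum_comp e.symm (fun i => d i * W (τ i) ω)
    have h2 : (∑ i, ∑ j, (d ∘ e.symm) i * (d ∘ e.symm) j * ρH ((τ ∘ e.symm) i) ((τ ∘ e.symm) j))
        = ∑ i, ∑ j, d i * d j * ρH (τ i) (τ j) := by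
      calc ∑ i, ∑ j, (d ∘ e.symm) i * (d ∘ e.symm) j * ρH ((τ ∘ e.symm) i) ((τ ∘ e.symm) j)
          = ∑ i, ∑ j : ι, (d ∘ e.symm) i * d j * ρH ((τ ∘ e.symm) i) (τ j) :=
            Finset.sum_congr rfl fun i _ =>
              Equiv.sum_comp e.symm (fun j => (d ∘ e.symm) i * d j * ρH ((τ ∘ e.symm) i) (τ j))
        _ = ∑ i : ι, ∑ j : ι, d i * d j * ρH (τ i) (τ j) :=
            Equiv.sum_comp e.symm (fun i => ∑ j : ι, d i * d j * ρH (τ i) (τ j))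
    rw [← h1, ← h2]
    exact h0
  -- continuity facts
  have h2H : (0:ℝ) < 2 * H := by linarith
  have hrpow : Continuous fun x : ℝ => x ^ (2 * H) := Real.continuous_rpow_const h2H.le
  have hρcont : Continuous fun p : ℝ × ℝ => ρH p.1 p.2 := by
    have hfe : (fun p : ℝ × ℝ => ρH p.1 p.2)
        = fun p => (1/2) * (p.1 ^ (2*H) + p.2 ^ (2*H) - |p.2 - p.1| ^ (2*H)) := by
      funext p; exact hρH p.1 p.2
    rw [hfe]
    exact continuous_const.mul
      (((hrpow.comp continuous_fst).add (hrpow.comp continuous_snd)).sub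
        (hrpow.comp ((continuous_snd.sub continuous_fst).abs)))
  have hρsymm : ∀ s u : ℝ, ρH s u = ρH u s := by
    intro s u; rw [hρH, hρH, abs_sub_comm]; ring
  intro n t c ht
  set μ0 : ℝ := ∑ i, c i * M (t i) with hμ0
  -- coefficients
  set b : ℕ → Fin n → ℕ → ℝ :=
    fun m i k => -(α * ν * c i * (t i / m) * Real.exp (-α * (t i - k * t i / m))) with hb
  -- approximating sequence
  set Z : ℕ → Ω → ℝ := fun m ω => μ0 + ∑ p : Fin n ⊕ Fin n × Fin m,
      (Sum.elim (fun i => ν * c i) (fun q : Fin n × Fin m => b m q.1 (q.2 : ℕ)) p) *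
        W (Sum.elim t (fun q : Fin n × Fin m => ((q.2 : ℕ) : ℝ) * t q.1 / m) p) ω with hZ
  set v : ℕ → ℝ := fun m => ∑ p : Fin n ⊕ Fin n × Fin m, ∑ q : Fin n ⊕ Fin n × Fin m,
      (Sum.elim (fun i => ν * c i) (fun q : Fin n × Fin m => b m q.1 (q.2 : ℕ)) p) *
      (Sum.elim (fun i => ν * c i) (fun q : Fin n × Fin m => b m q.1 (q.2 : ℕ)) q) *
      ρH (Sum.elim t (fun q : Fin n × Fin m => ((q.2 : ℕ) : ℝ) * t q.1 / m) p)
         (Sum.elim t (fun q : Fin n × Fin m => ((q.2 : ℕ) : ℝ) * t q.1 / m) q) with hv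
  have hZm : ∀ m, Measurable (Z m) := by
    intro m
    apply Measurable.add measurable_const
    exact Finset.measurable_sum _ (fun p _ => (hWmeas _).const_mul _)
  have hZg : ∀ m, Measure.map (Z m) P = gaussianReal μ0 (v m).toNNReal := by
    intro m
    have hτnn : ∀ p : Fin n ⊕ Fin n × Fin m,
        0 ≤ Sum.elim t (fun q : Fin n × Fin m => ((q.2 : ℕ) : ℝ) * t q.1 / m) p := by
      rintro (i | q)
      · exact ht i
      · exact div_nonneg (mul_nonneg (Nat.cast_nonneg _) (ht _)) (Nat.cast_nonneg _)
    have h0 := hWgauss' (Fin n ⊕ Fin n × Fin m) inferInstance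
      (Sum.elim t (fun q : Fin n × Fin m => ((q.2 : ℕ) : ℝ) * t q.1 / m))
      (Sum.elim (fun i => ν * c i) (fun q : Fin n × Fin m => b m q.1 (q.2 : ℕ))) hτnn
    have hcomp : Z m = (fun x => μ0 + x) ∘ (fun ω => ∑ p : Fin n ⊕ Fin n × Fin m,
        (Sum.elim (fun i => ν * c i) (fun q : Fin n × Fin m => b m q.1 (q.2 : ℕ)) p) *
          W (Sum.elim t (fun q : Fin n × Fin m => ((q.2 : ℕ) : ℝ) * t q.1 / m) p) ω) := rfl
    have hmeas : Measurable fun ω => ∑ p : Fin n ⊕ Fin n × Fin m,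
        (Sum.elim (fun i => ν * c i) (fun q : Fin n × Fin m => b m q.1 (q.2 : ℕ)) p) *
          W (Sum.elim t (fun q : Fin n × Fin m => ((q.2 : ℕ) : ℝ) * t q.1 / m) p) ω :=
      Finset.measurable_sum _ (fun p _ => (hWmeas _).const_mul _)
    have hma : Measurable fun x : ℝ => μ0 + x := by fun_prop
    rw [hcomp, ← Measure.map_map hma hmeas, h0, gaussianReal_map_const_add μ0, zero_add]
  -- the limiting quadratic form building blocks
  set E : ℕ → Fin n → Fin n → ℝ := fun m i j =>
    ν^2 * ρH (t i) (t j)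
    + (-(α*ν^2)) * rSum (fun x => Real.exp (-α*(t j - x)) * ρH (t i) x) (t j) m
    + (-(α*ν^2)) * rSum (fun x => Real.exp (-α*(t i - x)) * ρH (t j) x) (t i) m
    + (α^2*ν^2) * (∑ l ∈ Finset.range m, (t j / m) * ∑ k ∈ Finset.range m, (t i / m) *
        ((fun x y => Real.exp (-α*((t i - x) + (t j - y))) * ρH x y)
          (k * t i / m) (l * t j / m))) with hE
  have hER : ∀ i j, Filter.Tendsto (fun m => E m i j) Filter.atTop (nhds (R (t i) (t j))) := by
    intro i j
    have hρ1 : Continuous fun x : ℝ => ρH (t i) x :=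
      hρcont.comp (continuous_const.prodMk continuous_id)
    have hρ2 : Continuous fun x : ℝ => ρH (t j) x :=
      hρcont.comp (continuous_const.prodMk continuous_id)
    have hg1 : Continuous fun x => Real.exp (-α*(t j - x)) * ρH (t i) x :=
      (Real.continuous_exp.comp (by fun_prop)).mul hρ1
    have hg2 : Continuous fun x => Real.exp (-α*(t i - x)) * ρH (t j) x :=
      (Real.continuous_exp.comp (by fun_prop)).mul hρ2
    have hg3 : Continuous fun p : ℝ × ℝ =>
        (fun x y => Real.exp (-α*((t i - x) + (t j - y))) * ρH x y) p.1 p.2 :=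
      (Real.continuous_exp.comp (by fun_prop)).mul hρcont
    have h1 := rSum_tendsto (ht j) hg1
    have h2 := rSum_tendsto (ht i) hg2
    have h3 := rSum2_tendsto (h := fun x y => Real.exp (-α*((t i - x) + (t j - y))) * ρH x y)
      (ht i) (ht j) hg3
    have hcomb := ((((tendsto_const_nhds (x := ν^2 * ρH (t i) (t j))).add
      (h1.const_mul (-(α*ν^2)))).add (h2.const_mul (-(α*ν^2)))).add
      (h3.const_mul (α^2*ν^2)))
    have heq : R (t i) (t j) = ν^2 * ρH (t i) (t j)
        + (-(α*ν^2)) * (∫ x in (0:ℝ)..t j, Real.exp (-α*(t j - x)) * ρH (t i) x)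
        + (-(α*ν^2)) * (∫ x in (0:ℝ)..t i, Real.exp (-α*(t i - x)) * ρH (t j) x)
        + (α^2*ν^2) * (∫ y in (0:ℝ)..t j, ∫ x in (0:ℝ)..t i,
            Real.exp (-α*((t i - x) + (t j - y))) * ρH x y) := by
      rw [hR]; ring
    rw [hE, heq]
    exact hcomb
  -- the quadratic form identity
  have hveq : ∀ m, v m = ∑ i, ∑ j, c i * c j * E m i j := by
    intro m
    rw [hv]
    simp only [Fintype.sum_sum_type, Fintype.sum_prod_type, Sum.elim_inl, Sum.elim_inr,
      Finset.sum_add_distrib]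
    simp only [hE, mul_add, Finset.sum_add_distrib]
    have e1 : (∑ i : Fin n, ∑ j : Fin n, ν * c i * (ν * c j) * ρH (t i) (t j))
        = ∑ i : Fin n, ∑ j : Fin n, c i * c j * (ν^2 * ρH (t i) (t j)) :=
      Finset.sum_congr rfl fun i _ => Finset.sum_congr rfl fun j _ => by ring
    have e2 : (∑ i : Fin n, ∑ j : Fin n, ∑ l : Fin m,
          ν * c i * b m j (l:ℕ) * ρH (t i) (((l:ℕ):ℝ) * t j / (m:ℝ)))
        = ∑ i : Fin n, ∑ j : Fin n, c i * c j *
            (-(α*ν^2) * rSum (fun x => Real.exp (-α*(t j - x)) * ρH (t i) x) (t j) m) := by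
      refine Finset.sum_congr rfl fun i _ => Finset.sum_congr rfl fun j _ => ?_
      rw [Fin.sum_univ_eq_sum_range
        (fun l : ℕ => ν * c i * b m j l * ρH (t i) ((l:ℝ) * t j / (m:ℝ))) m]
      simp only [rSum, Finset.mul_sum]
      refine Finset.sum_congr rfl fun k _ => ?_
      simp only [hb]
      ring
    have e3 : (∑ i : Fin n, ∑ k : Fin m, ∑ j : Fin n,
          b m i (k:ℕ) * (ν * c j) * ρH (((k:ℕ):ℝ) * t i / (m:ℝ)) (t j))
        = ∑ i : Fin n, ∑ j : Fin n, c i * c j *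
            (-(α*ν^2) * rSum (fun x => Real.exp (-α*(t i - x)) * ρH (t j) x) (t i) m) := by
      refine Finset.sum_congr rfl fun i _ => ?_
      rw [Finset.sum_comm]
      refine Finset.sum_congr rfl fun j _ => ?_
      rw [Fin.sum_univ_eq_sum_range
        (fun k : ℕ => b m i k * (ν * c j) * ρH ((k:ℝ) * t i / (m:ℝ)) (t j)) m]
      simp only [rSum, Finset.mul_sum]
      refine Finset.sum_congr rfl fun k _ => ?_
      rw [hρsymm ((k:ℝ) * t i / (m:ℝ)) (t j)]
      simp only [hb]
      ring
    have e4 : (∑ i : Fin n, ∑ k : Fin m, ∑ j : Fin n, ∑ l : Fin m,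
          b m i (k:ℕ) * b m j (l:ℕ) *
            ρH (((k:ℕ):ℝ) * t i / (m:ℝ)) (((l:ℕ):ℝ) * t j / (m:ℝ)))
        = ∑ i : Fin n, ∑ j : Fin n, c i * c j *
            (α^2*ν^2 * ∑ l ∈ Finset.range m, (t j / (m:ℝ)) * ∑ k ∈ Finset.range m,
              (t i / (m:ℝ)) *
                (Real.exp (-α*(t i - (k:ℝ) * t i / (m:ℝ)) + -α*(t j - (l:ℝ) * t j / (m:ℝ))) *
                  ρH ((k:ℝ) * t i / (m:ℝ)) ((l:ℝ) * t j / (m:ℝ)))) := by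
      refine Finset.sum_congr rfl fun i _ => ?_
      rw [Finset.sum_comm]
      refine Finset.sum_congr rfl fun j _ => ?_
      rw [Finset.sum_comm]
      rw [Fin.sum_univ_eq_sum_range
        (fun l : ℕ => ∑ k : Fin m, b m i (k:ℕ) * b m j l *
          ρH (((k:ℕ):ℝ) * t i / (m:ℝ)) ((l:ℝ) * t j / (m:ℝ))) m]
      simp only [Finset.mul_sum]
      refine Finset.sum_congr rfl fun l _ => ?_
      rw [Fin.sum_univ_eq_sum_range
        (fun k : ℕ => b m i k * b m j l *
          ρH ((k:ℝ) * t i / (m:ℝ)) ((l:ℝ) * t j / (m:ℝ))) m]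
      refine Finset.sum_congr rfl fun k _ => ?_
      rw [Real.exp_add]
      simp only [hb]
      ring
    rw [e1, e2, e3, e4]
    ring
  have hvR : Filter.Tendsto v Filter.atTop
      (nhds (∑ i, ∑ j, c i * c j * R (t i) (t j))) := by
    rw [show v = fun m => ∑ i, ∑ j, c i * c j * E m i j from funext hveq]
    exact tendsto_finset_sum _ (fun i _ => tendsto_finset_sum _
      (fun j _ => ((hER i j).const_mul _)))
  have hv' : Filter.Tendsto (fun m => (v m).toNNReal) Filter.atTop
      (nhds (∑ i, ∑ j, c i * c j * R (t i) (t j)).toNNReal) :=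
    (continuous_real_toNNReal.tendsto _).comp hvR
  -- a.e. convergence of the approximations
  have hae : ∀ᵐ ω ∂P, Filter.Tendsto (fun m => Z m ω) Filter.atTop
      (nhds (∑ i, c i * X (t i) ω)) := by
    filter_upwards [hWcont] with ω hω
    have hint : ∀ i, (∫ s in (0:ℝ)..t i, Real.exp (-α * (t i - s)) * ν * W s ω)
        = ν * ∫ s in (0:ℝ)..t i, Real.exp (-α * (t i - s)) * W s ω := by
      intro i
      rw [← intervalIntegral.integral_const_mul]
      apply intervalIntegral.integral_congr
      intro s _
      ring
    have hlim : (∑ i, c i * X (t i) ω) = μ0 + ∑ i, ((ν * c i) * W (t i) ω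
        + (-(α * ν * c i)) * ∫ s in (0:ℝ)..t i, Real.exp (-α * (t i - s)) * W s ω) := by
      rw [hμ0, ← Finset.sum_add_distrib]
      apply Finset.sum_congr rfl
      intro i _
      rw [hX, hM, hint i]
      ring
    have hZval : ∀ m, Z m ω = μ0 + ∑ i, ((ν * c i) * W (t i) ω
        + (-(α*ν*c i)) * rSum (fun s => Real.exp (-α*(t i - s)) * W s ω) (t i) m) := by
      intro m
      rw [hZ]
      simp only []
      congr 1
      rw [Fintype.sum_sum_type]
      simp only [Sum.elim_inl, Sum.elim_inr]
      rw [Fintype.sum_prod_type, Finset.sum_add_distrib]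
      congr 1
      apply Finset.sum_congr rfl
      intro i _
      show (∑ y : Fin m, b m i (y:ℕ) * W (((y:ℕ):ℝ) * t i / (m:ℝ)) ω)
          = -(α*ν*c i) * rSum (fun s => Real.exp (-α*(t i - s)) * W s ω) (t i) m
      rw [Fin.sum_univ_eq_sum_range (fun k : ℕ => b m i k * W ((k:ℝ) * t i / (m:ℝ)) ω) m]
      simp only [rSum, Finset.mul_sum]
      apply Finset.sum_congr rfl
      intro k _
      simp only [hb]
      ring
    rw [hlim, show (fun m => Z m ω) = fun m => μ0 + ∑ i, ((ν * c i) * W (t i) ω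
        + (-(α*ν*c i)) * rSum (fun s => Real.exp (-α*(t i - s)) * W s ω) (t i) m)
      from funext hZval]
    apply Filter.Tendsto.const_add
    apply tendsto_finset_sum
    intro i _
    have hgi : Continuous fun s => Real.exp (-α*(t i - s)) * W s ω :=
      (Real.continuous_exp.comp (by fun_prop)).mul hω
    exact Filter.Tendsto.const_add _ ((rSum_tendsto (ht i) hgi).const_mul _)
  exact gaussian_limit P hZm hZg hv' hae
end
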